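/- In the cooperative model, for all p ∈ [0,1], naturals x, y, k, and nonzero naturals N, T: P^{(x,y)}_{p,q}(Z_T ≥ kN) ≥ γ^{*a}([k, ∞)), where a = min(⌊x/N⌋, ⌊y/N⌋) and γ is the law of ⌊Z_T/N⌋ under P^{(N,N)}_{p,q}. -/

import Mathlib

/-!
Write `coopLaw p q n s` for the law of `(X_n, Y_n)` under `P^s` and `≤ₛₜ` for the stochastic
order (integrals of monotone functions). Since `Bin(m, r) ∗ Bin(m', r) = Bin(m + m', r)` and `min`
is superadditive, one step of the chain from `s` dominates the sum of independent steps from `s₁`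
and `s₂` whenever `s₁ + s₂ ≤ s`, and through the Markov property this persists at every time.
Started from `(x, y) ≥ a • (N, N)`, the chain therefore dominates a sum of `a` independent copies
started from `(N, N)`; as `w ↦ ⌊min w / N⌋` is monotone and superadditive, `⌊Z_T / N⌋` under
`P^{(x,y)}` dominates `γ^{*a}`.

`IsCoop` prescribes cylinder probabilities but does not make the chain measurable, so it is used
through countable subadditivity alone: `P {X_n ∈ F} ≤ coopLaw p q n s F` for every `F`, and the
reverse inequality follows by passing to complements.
-/

open MeasureTheory ProbabilityTheory Filter
open scoped ENNReal

/-- Convolution of two measures on `ℕ`. -/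
noncomputable def mconv (μ ν : Measure ℕ) : Measure ℕ :=
  Measure.map (fun p : ℕ × ℕ => p.1 + p.2) (μ.prod ν)

/-- `i`-fold convolution power of a measure on `ℕ`. -/
noncomputable def convPow (ν : Measure ℕ) : ℕ → Measure ℕ
  | 0 => Measure.dirac 0
  | n + 1 => mconv (convPow ν n) ν

/-- The Bernoulli measure with parameter `r` on `ℕ`. -/
noncomputable def bern (r : ℝ) : Measure ℕ :=
  ENNReal.ofReal (1 - r) • Measure.dirac 0 + ENNReal.ofReal r • Measure.dirac 1

/-- The binomial distribution `Bin(n, r)` as a measure on `ℕ`. -/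
noncomputable def binomM (n : ℕ) (r : ℝ) : Measure ℕ := convPow (bern r) n

/-- Transition measure of the cooperative model from state `(x, y)`:
`Ber(2,q)^{*(x+y)} ⊗ Ber(2,p)^{*min(x,y)}`. -/
noncomputable def coopStep (p q : ℝ) (x y : ℕ) : Measure (ℕ × ℕ) :=
  (binomM (2 * (x + y)) q).prod (binomM (2 * min x y) p)

/-- `(XY n)` is the cooperative two-type Markov chain with parameters `p, q`
started from `(x, y)`, characterized by its finite-dimensional distributions. -/
def IsCoop {Ω : Type*} [MeasurableSpace Ω] (P : Measure Ω)
    (XY : ℕ → Ω → ℕ × ℕ) (p q : ℝ) (x y : ℕ) : Prop :=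
  ∀ n : ℕ, ∀ a : ℕ → ℕ × ℕ,
    P {ω | ∀ k ≤ n, XY k ω = a k} =
      (if a 0 = (x, y) then 1 else 0) *
        ∏ k ∈ Finset.range n, coopStep p q (a k).1 (a k).2 {a (k + 1)}

-- `Measure.map` is `0` along a map that is not a.e.-measurable.
theorem map_apply_le_preimage {α β : Type*} [MeasurableSpace α] [MeasurableSpace β]
    {μ : Measure α} {f : α → β} {s : Set β} (hs : MeasurableSet s) :
    μ.map f s ≤ μ (f ⁻¹' s) := by
  by_cases hf : AEMeasurable f μ
  · exact (Measure.map_apply_of_aemeasurable hf hs).le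
  · simp [Measure.map_of_not_aemeasurable hf]

section StochasticOrder

variable {α β M : Type*} [MeasurableSpace α] [MeasurableSpace β] [MeasurableSpace M]

def StochLE [Preorder α] (μ ν : Measure α) : Prop :=
  ∀ f : α → ℝ≥0∞, Measurable f → Monotone f → ∫⁻ a, f a ∂μ ≤ ∫⁻ a, f a ∂ν

infix:50 " ≤ₛₜ " => StochLE

namespace StochLE

theorem refl [Preorder α] (μ : Measure α) : μ ≤ₛₜ μ := fun _ _ _ => le_rfl

theorem trans [Preorder α] {μ ν ρ : Measure α} (h₁ : μ ≤ₛₜ ν) (h₂ : ν ≤ₛₜ ρ) : μ ≤ₛₜ ρ :=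
  fun f hf hmono => (h₁ f hf hmono).trans (h₂ f hf hmono)

instance [Preorder α] : Trans (StochLE (α := α)) (StochLE (α := α)) (StochLE (α := α)) :=
  ⟨trans⟩

theorem of_le [Preorder α] {μ ν : Measure α} (h : μ ≤ ν) : μ ≤ₛₜ ν :=
  fun _ _ _ => lintegral_mono' h le_rfl

theorem apply_le [Preorder α] {μ ν : Measure α} (h : μ ≤ₛₜ ν) {s : Set α}
    (hs : MeasurableSet s) (hup : IsUpperSet s) : μ s ≤ ν s := by
  have hmono : Monotone (s.indicator (1 : α → ℝ≥0∞)) := by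
    intro a b hab
    by_cases ha : a ∈ s
    · simp [ha, hup hab ha]
    · simp [ha]
  simpa only [lintegral_indicator_one hs] using h _ (measurable_one.indicator hs) hmono

theorem dirac [Preorder α] {a b : α} (hab : a ≤ b) : Measure.dirac a ≤ₛₜ Measure.dirac b := by
  intro f hf hf_mono
  rw [lintegral_dirac' a hf, lintegral_dirac' b hf]
  exact hf_mono hab

theorem map [Preorder α] [Preorder β] {μ ν : Measure α} (h : μ ≤ₛₜ ν) {g : α → β}
    (hg : Measurable g) (hmono : Monotone g) : μ.map g ≤ₛₜ ν.map g := by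
  intro f hf hf_mono
  rw [lintegral_map hf hg, lintegral_map hf hg]
  exact h _ (hf.comp hg) (hf_mono.comp hmono)

theorem map_of_forall_le [Preorder β] (μ : Measure α) {g h : α → β} (hg : Measurable g)
    (hh : Measurable h) (hgh : ∀ a, g a ≤ h a) : μ.map g ≤ₛₜ μ.map h := by
  intro f hf hf_mono
  rw [lintegral_map hf hg, lintegral_map hf hh]
  exact lintegral_mono fun a => hf_mono (hgh a)

theorem prod [Preorder α] [Preorder β] {μ₁ ν₁ : Measure α} {μ₂ ν₂ : Measure β}
    [SFinite μ₂] [SFinite ν₂] (h₁ : μ₁ ≤ₛₜ ν₁) (h₂ : μ₂ ≤ₛₜ ν₂) :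
    μ₁.prod μ₂ ≤ₛₜ ν₁.prod ν₂ := by
  intro f hf hf_mono
  rw [lintegral_prod _ hf.aemeasurable, lintegral_prod _ hf.aemeasurable]
  calc ∫⁻ a, ∫⁻ b, f (a, b) ∂μ₂ ∂μ₁ ≤ ∫⁻ a, ∫⁻ b, f (a, b) ∂ν₂ ∂μ₁ :=
        lintegral_mono fun a => h₂ _ (hf.comp measurable_prodMk_left)
          fun b b' hb => hf_mono ⟨le_rfl, hb⟩
    _ ≤ ∫⁻ a, ∫⁻ b, f (a, b) ∂ν₂ ∂ν₁ :=
        h₁ _ hf.lintegral_prod_right' fun a a' ha => lintegral_mono fun b => hf_mono ⟨ha, le_rfl⟩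

theorem bind_right [Preorder β] (μ : Measure α) {K L : α → Measure β} (hK : Measurable K)
    (hL : Measurable L) (h : ∀ a, K a ≤ₛₜ L a) : μ.bind K ≤ₛₜ μ.bind L := by
  intro f hf hf_mono
  rw [Measure.lintegral_bind hK.aemeasurable hf.aemeasurable,
    Measure.lintegral_bind hL.aemeasurable hf.aemeasurable]
  exact lintegral_mono fun a => h a f hf hf_mono

theorem bind_left [Preorder α] [Preorder β] {μ ν : Measure α} (h : μ ≤ₛₜ ν) {K : α → Measure β}
    (hK : Measurable K) (hK_mono : ∀ a b, a ≤ b → K a ≤ₛₜ K b) : μ.bind K ≤ₛₜ ν.bind K := by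
  intro f hf hf_mono
  rw [Measure.lintegral_bind hK.aemeasurable hf.aemeasurable,
    Measure.lintegral_bind hK.aemeasurable hf.aemeasurable]
  exact h _ ((Measure.measurable_lintegral hf).comp hK) fun a b hab => hK_mono a b hab f hf hf_mono

variable [AddCommMonoid M] [PartialOrder M] [MeasurableAdd₂ M]

theorem conv [IsOrderedAddMonoid M] {μ₁ ν₁ μ₂ ν₂ : Measure M} [SFinite μ₂] [SFinite ν₂]
    (h₁ : μ₁ ≤ₛₜ ν₁) (h₂ : μ₂ ≤ₛₜ ν₂) : μ₁ ∗ μ₂ ≤ₛₜ ν₁ ∗ ν₂ :=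
  (h₁.prod h₂).map measurable_add fun _ _ h => add_le_add h.1 h.2

theorem le_conv [CanonicallyOrderedAdd M] (μ ν : Measure M) [IsProbabilityMeasure ν] :
    μ ≤ₛₜ μ ∗ ν := by
  intro f hf hf_mono
  rw [Measure.lintegral_conv hf]
  calc ∫⁻ x, f x ∂μ = ∫⁻ x, ∫⁻ _, f x ∂ν ∂μ := by simp
    _ ≤ ∫⁻ x, ∫⁻ y, f (x + y) ∂ν ∂μ :=
        lintegral_mono fun x => lintegral_mono fun y => hf_mono le_self_add

theorem mono_of_conv_le [CanonicallyOrderedAdd M] {C : M → Measure M}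
    [IsProbabilityMeasure (C 0)] (hC : ∀ s₁ s₂ s, s₁ + s₂ ≤ s → C s₁ ∗ C s₂ ≤ₛₜ C s)
    {s s' : M} (hss : s ≤ s') : C s ≤ₛₜ C s' :=
  (le_conv (C s) (C 0)).trans (hC s 0 s' (by simpa using hss))

end StochLE

end StochasticOrder

section Convolution

variable {M N : Type*} [AddMonoid M] [AddMonoid N] [MeasurableSpace M] [MeasurableSpace N]
  [MeasurableAdd₂ M] [MeasurableAdd₂ N]

instance : MeasurableAdd₂ (M × N) :=
  ⟨(measurable_fst.fst.add measurable_snd.fst).prodMk (measurable_fst.snd.add measurable_snd.snd)⟩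

theorem prod_conv_prod (μ₁ μ₂ : Measure M) (ν₁ ν₂ : Measure N) [SFinite μ₂] [SFinite ν₁]
    [SFinite ν₂] : μ₁.prod ν₁ ∗ μ₂.prod ν₂ = (μ₁ ∗ μ₂).prod (ν₁ ∗ ν₂) := by
  refine Measure.ext_of_lintegral _ fun f hf => ?_
  rw [Measure.lintegral_conv hf, lintegral_prod _ (by fun_prop), lintegral_prod _ hf.aemeasurable,
    Measure.lintegral_conv (by fun_prop)]
  refine lintegral_congr fun a₁ => ?_
  have hsplit (b₁ : N) : ∫⁻ z, f ((a₁, b₁) + z) ∂μ₂.prod ν₂ =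
      ∫⁻ a₂, ∫⁻ b₂, f (a₁ + a₂, b₁ + b₂) ∂ν₂ ∂μ₂ :=
    lintegral_prod _ (hf.comp (measurable_const_add _)).aemeasurable
  simp_rw [hsplit]
  rw [lintegral_lintegral_swap (by fun_prop)]
  exact lintegral_congr fun a₂ =>
    (Measure.lintegral_conv (f := fun y => f (a₁ + a₂, y)) (by fun_prop)).symm

theorem StochLE.map_conv_map [Preorder N] {φ : M → N} (hφ : Measurable φ)
    (hsuper : ∀ a b, φ a + φ b ≤ φ (a + b)) (μ ν : Measure M) [SFinite μ] [SFinite ν] :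
    μ.map φ ∗ ν.map φ ≤ₛₜ (μ ∗ ν).map φ := by
  have hl : μ.map φ ∗ ν.map φ = (μ.prod ν).map fun z => φ z.1 + φ z.2 := by
    rw [Measure.conv, Measure.map_prod_map _ _ hφ hφ,
      Measure.map_map measurable_add (hφ.prodMap hφ)]
    rfl
  have hr : (μ ∗ ν).map φ = (μ.prod ν).map fun z => φ (z.1 + z.2) := by
    rw [Measure.conv, Measure.map_map hφ measurable_add]
    rfl
  rw [hl, hr]
  exact StochLE.map_of_forall_le _ (by fun_prop) (by fun_prop) fun z => hsuper z.1 z.2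

theorem bind_conv_bind {α β : Type*} [MeasurableSpace α] [MeasurableSpace β] [Countable α]
    [MeasurableSingletonClass α] [Countable β] [MeasurableSingletonClass β] [Countable M]
    [MeasurableSingletonClass M] (μ : Measure α) (ν : Measure β) [SFinite ν]
    (K : α → Measure M) (L : β → Measure M) [∀ a, SFinite (K a)] [∀ b, SFinite (L b)] :
    μ.bind K ∗ ν.bind L = (μ.prod ν).bind fun z => K z.1 ∗ L z.2 := by
  refine Measure.ext_of_lintegral _ fun f hf => ?_
  rw [Measure.lintegral_conv hf, Measure.lintegral_bind (measurable_of_countable _).aemeasurable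
      (measurable_of_countable _).aemeasurable,
    Measure.lintegral_bind (measurable_of_countable _).aemeasurable hf.aemeasurable,
    lintegral_prod _ (measurable_of_countable _).aemeasurable]
  refine lintegral_congr fun a => ?_
  simp_rw [Measure.lintegral_bind (measurable_of_countable L).aemeasurable
    (measurable_of_countable _).aemeasurable, Measure.lintegral_conv hf]
  exact lintegral_lintegral_swap (measurable_of_countable _).aemeasurable

end Convolution

section ConvolutionPower

theorem mconv_eq_conv (μ ν : Measure ℕ) : mconv μ ν = μ ∗ ν := rfl

instance (ν : Measure ℕ) [IsProbabilityMeasure ν] (n : ℕ) :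
    IsProbabilityMeasure (convPow ν n) := by
  induction n with
  | zero => exact Measure.dirac.isProbabilityMeasure
  | succ n ih => rw [convPow, mconv_eq_conv]; infer_instance

theorem convPow_add (ν : Measure ℕ) [IsProbabilityMeasure ν] (m n : ℕ) :
    convPow ν (m + n) = convPow ν m ∗ convPow ν n := by
  induction n with
  | zero => simp [convPow]
  | succ n ih =>
    rw [← add_assoc, convPow, convPow, mconv_eq_conv, mconv_eq_conv, ih, Measure.conv_assoc]

theorem convPow_stochLE {ν ν' : Measure ℕ} [SFinite ν] [SFinite ν'] (h : ν ≤ₛₜ ν') (n : ℕ) :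
    convPow ν n ≤ₛₜ convPow ν' n := by
  induction n with
  | zero => exact .refl _
  | succ n ih => exact ih.conv h

theorem isProbabilityMeasure_bern {r : ℝ} (h0 : 0 ≤ r) (h1 : r ≤ 1) :
    IsProbabilityMeasure (bern r) := by
  constructor
  simp only [bern, Measure.add_apply, Measure.smul_apply, measure_univ, smul_eq_mul, mul_one]
  rw [← ENNReal.ofReal_add (by linarith) h0]
  norm_num

theorem binomM_mono {r : ℝ} (h0 : 0 ≤ r) (h1 : r ≤ 1) {m n : ℕ} (hmn : m ≤ n) :
    binomM m r ≤ₛₜ binomM n r := by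
  have := isProbabilityMeasure_bern h0 h1
  obtain ⟨d, rfl⟩ := Nat.exists_eq_add_of_le hmn
  rw [binomM, binomM, convPow_add]
  exact StochLE.le_conv _ _

end ConvolutionPower

section CoopLaw

variable {p q : ℝ}

noncomputable def coopKernel (p q : ℝ) (s : ℕ × ℕ) : Measure (ℕ × ℕ) := coopStep p q s.1 s.2

noncomputable def coopLaw (p q : ℝ) : ℕ → ℕ × ℕ → Measure (ℕ × ℕ)
  | 0 => Measure.dirac
  | n + 1 => fun s => (coopKernel p q s).bind (coopLaw p q n)

theorem coopLaw_succ_apply (p q : ℝ) (n : ℕ) (s : ℕ × ℕ) (F : Set (ℕ × ℕ)) :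
    coopLaw p q (n + 1) s F = ∑' w, coopLaw p q n w F * coopKernel p q s {w} := by
  rw [coopLaw, Measure.bind_apply (.of_discrete) (measurable_of_countable _).aemeasurable,
    lintegral_countable']

theorem isProbabilityMeasure_coopKernel (hp0 : 0 ≤ p) (hp1 : p ≤ 1) (hq0 : 0 ≤ q) (hq1 : q ≤ 1)
    (s : ℕ × ℕ) : IsProbabilityMeasure (coopKernel p q s) := by
  have := isProbabilityMeasure_bern hp0 hp1
  have := isProbabilityMeasure_bern hq0 hq1
  unfold coopKernel coopStep binomM
  infer_instance

theorem isProbabilityMeasure_coopLaw (hp0 : 0 ≤ p) (hp1 : p ≤ 1) (hq0 : 0 ≤ q) (hq1 : q ≤ 1)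
    (n : ℕ) (s : ℕ × ℕ) : IsProbabilityMeasure (coopLaw p q n s) := by
  induction n generalizing s with
  | zero => exact Measure.dirac.isProbabilityMeasure
  | succ n ih =>
    have := isProbabilityMeasure_coopKernel hp0 hp1 hq0 hq1 s
    exact isProbabilityMeasure_bind (measurable_of_countable _).aemeasurable (.of_forall ih)

theorem coopKernel_conv_le (hp0 : 0 ≤ p) (hp1 : p ≤ 1) (hq0 : 0 ≤ q) (hq1 : q ≤ 1)
    {s₁ s₂ s : ℕ × ℕ} (h : s₁ + s₂ ≤ s) :
    coopKernel p q s₁ ∗ coopKernel p q s₂ ≤ₛₜ coopKernel p q s := by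
  have := isProbabilityMeasure_bern hp0 hp1
  have := isProbabilityMeasure_bern hq0 hq1
  obtain ⟨h₁, h₂⟩ := h
  simp only [Prod.fst_add, Prod.snd_add] at h₁ h₂
  simp only [coopKernel, coopStep, binomM]
  rw [prod_conv_prod, ← convPow_add, ← convPow_add]
  exact (binomM_mono hq0 hq1 (by omega)).prod (binomM_mono hp0 hp1 (by omega))

theorem coopLaw_conv_le (hp0 : 0 ≤ p) (hp1 : p ≤ 1) (hq0 : 0 ≤ q) (hq1 : q ≤ 1) (n : ℕ)
    {s₁ s₂ s : ℕ × ℕ} (h : s₁ + s₂ ≤ s) :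
    coopLaw p q n s₁ ∗ coopLaw p q n s₂ ≤ₛₜ coopLaw p q n s := by
  induction n generalizing s₁ s₂ s with
  | zero => simpa [coopLaw] using StochLE.dirac h
  | succ n ih =>
    have := isProbabilityMeasure_coopLaw hp0 hp1 hq0 hq1 n
    have := isProbabilityMeasure_coopKernel hp0 hp1 hq0 hq1
    calc coopLaw p q (n + 1) s₁ ∗ coopLaw p q (n + 1) s₂
        = ((coopKernel p q s₁).prod (coopKernel p q s₂)).bind
            fun z => coopLaw p q n z.1 ∗ coopLaw p q n z.2 := bind_conv_bind _ _ _ _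
      _ ≤ₛₜ ((coopKernel p q s₁).prod (coopKernel p q s₂)).bind
            fun z => coopLaw p q n (z.1 + z.2) :=
        StochLE.bind_right _ (measurable_of_countable _) (measurable_of_countable _)
          fun z => ih le_rfl
      _ = (coopKernel p q s₁ ∗ coopKernel p q s₂).bind (coopLaw p q n) := by
        rw [Measure.conv, Measure.bind, Measure.bind, Measure.map_map (measurable_of_countable _)
          measurable_add]
        rfl
      _ ≤ₛₜ coopLaw p q (n + 1) s :=
        StochLE.bind_left (coopKernel_conv_le hp0 hp1 hq0 hq1 h) (measurable_of_countable _)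
          fun w w' => StochLE.mono_of_conv_le fun _ _ _ => ih

end CoopLaw

namespace IsCoop

variable {Ω : Type*} [MeasurableSpace Ω] {P : Measure Ω} {XY : ℕ → Ω → ℕ × ℕ} {p q : ℝ}
  {x y : ℕ}

theorem measure_cylinder_succ (hXY : IsCoop P XY p q x y) {n : ℕ} {a a' : ℕ → ℕ × ℕ}
    (h : ∀ k ≤ n, a' k = a k) :
    P {ω | ∀ k ≤ n + 1, XY k ω = a' k} =
      P {ω | ∀ k ≤ n, XY k ω = a k} * coopKernel p q (a n) {a' (n + 1)} := by
  rw [hXY, hXY, Finset.prod_range_succ, h 0 (Nat.zero_le _), h n le_rfl, mul_assoc]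
  congr 2
  exact Finset.prod_congr rfl fun k hk => by
    rw [h k (Finset.mem_range.1 hk).le, h (k + 1) (Finset.mem_range.1 hk)]

theorem measure_cylinder_inter_le (hXY : IsCoop P XY p q x y) (m n : ℕ) (a : ℕ → ℕ × ℕ)
    (F : Set (ℕ × ℕ)) :
    P {ω | (∀ k ≤ n, XY k ω = a k) ∧ XY (n + m) ω ∈ F} ≤
      P {ω | ∀ k ≤ n, XY k ω = a k} * coopLaw p q m (a n) F := by
  induction m generalizing n a with
  | zero =>
    by_cases ha : a n ∈ F
    · rw [coopLaw, Measure.dirac_apply_of_mem ha, mul_one]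
      exact measure_mono fun ω hω => hω.1
    · have hempty : {ω | (∀ k ≤ n, XY k ω = a k) ∧ XY (n + 0) ω ∈ F} = ∅ :=
        Set.eq_empty_of_forall_notMem fun ω hω => ha (hω.1 n le_rfl ▸ hω.2)
      rw [hempty, measure_empty]
      exact bot_le
  | succ m ih =>
    let extend (w : ℕ × ℕ) := Function.update a (n + 1) w
    have hagree (w : ℕ × ℕ) : ∀ k ≤ n, extend w k = a k := fun k hk =>
      Function.update_of_ne (by omega) _ _
    calc P {ω | (∀ k ≤ n, XY k ω = a k) ∧ XY (n + (m + 1)) ω ∈ F}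
        ≤ P (⋃ w, {ω | (∀ k ≤ n + 1, XY k ω = extend w k) ∧ XY (n + 1 + m) ω ∈ F}) := by
          refine measure_mono fun ω ⟨hcyl, hF⟩ => Set.mem_iUnion.2 ⟨XY (n + 1) ω, ?_, ?_⟩
          · intro k hk
            rcases Nat.lt_or_eq_of_le hk with hk | rfl
            · rw [hagree _ k (by omega), hcyl k (by omega)]
            · simp [extend]
          · rwa [add_right_comm, add_assoc]
      _ ≤ ∑' w, P {ω | (∀ k ≤ n + 1, XY k ω = extend w k) ∧ XY (n + 1 + m) ω ∈ F} :=
          measure_iUnion_le _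
      _ ≤ ∑' w, P {ω | ∀ k ≤ n + 1, XY k ω = extend w k} * coopLaw p q m w F :=
          ENNReal.tsum_le_tsum fun w => by simpa [extend] using ih (n + 1) (extend w)
      _ = P {ω | ∀ k ≤ n, XY k ω = a k} * coopLaw p q (m + 1) (a n) F := by
          simp_rw [hXY.measure_cylinder_succ (hagree _), coopLaw_succ_apply,
            ← ENNReal.tsum_mul_left]
          refine tsum_congr fun w => ?_
          simp only [extend, Function.update_self]
          ring

theorem measure_start_ne (hXY : IsCoop P XY p q x y) : P {ω | XY 0 ω ≠ (x, y)} = 0 := by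
  refine measure_mono_null (t := ⋃ (w : ℕ × ℕ) (_ : w ≠ (x, y)), {ω | ∀ k ≤ 0, XY k ω = w})
    (fun ω hω => Set.mem_iUnion₂.2 ⟨XY 0 ω, hω, fun k hk => by rw [Nat.le_zero.1 hk]⟩)
    (measure_iUnion_null fun w => measure_iUnion_null fun hw => ?_)
  simpa [hw] using hXY 0 fun _ => w

theorem measure_mem_le (hXY : IsCoop P XY p q x y) (n : ℕ) (F : Set (ℕ × ℕ)) :
    P {ω | XY n ω ∈ F} ≤ coopLaw p q n (x, y) F := by
  have hstart : P {ω | ∀ k ≤ 0, XY k ω = (x, y)} = 1 := (hXY 0 fun _ => (x, y)).trans (by simp)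
  calc P {ω | XY n ω ∈ F}
      ≤ P ({ω | (∀ k ≤ 0, XY k ω = (x, y)) ∧ XY (0 + n) ω ∈ F} ∪ {ω | XY 0 ω ≠ (x, y)}) := by
        refine measure_mono fun ω hω => ?_
        by_cases h0 : XY 0 ω = (x, y)
        · exact Or.inl ⟨fun k hk => by rwa [Nat.le_zero.1 hk], by rwa [zero_add]⟩
        · exact Or.inr h0
    _ ≤ P {ω | (∀ k ≤ 0, XY k ω = (x, y)) ∧ XY (0 + n) ω ∈ F} + P {ω | XY 0 ω ≠ (x, y)} :=
        measure_union_le _ _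
    _ ≤ P {ω | ∀ k ≤ 0, XY k ω = (x, y)} * coopLaw p q n (x, y) F := by
        rw [hXY.measure_start_ne, add_zero]
        exact hXY.measure_cylinder_inter_le n 0 (fun _ => (x, y)) F
    _ = coopLaw p q n (x, y) F := by rw [hstart, one_mul]

theorem coopLaw_le (hp0 : 0 ≤ p) (hp1 : p ≤ 1) (hq0 : 0 ≤ q) (hq1 : q ≤ 1)
    (hXY : IsCoop P XY p q x y) (n : ℕ) (E : Set (ℕ × ℕ)) :
    coopLaw p q n (x, y) E ≤ P {ω | XY n ω ∈ E} := by
  have := isProbabilityMeasure_coopLaw hp0 hp1 hq0 hq1 n (x, y)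
  have hP : 1 ≤ P Set.univ := by
    simpa using (hXY 0 fun _ => (x, y)).symm.le.trans (measure_mono (Set.subset_univ _))
  refine ENNReal.le_of_add_le_add_right (measure_ne_top (coopLaw p q n (x, y)) Eᶜ) ?_
  calc coopLaw p q n (x, y) E + coopLaw p q n (x, y) Eᶜ = 1 := by
        rw [measure_add_measure_compl (.of_discrete), measure_univ]
    _ ≤ P {ω | XY n ω ∈ E} + P {ω | XY n ω ∈ E}ᶜ := hP.trans (measure_univ_le_add_compl _)
    _ ≤ P {ω | XY n ω ∈ E} + coopLaw p q n (x, y) Eᶜ := by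
        gcongr
        exact hXY.measure_mem_le n Eᶜ

theorem map_le (hXY : IsCoop P XY p q x y) (n : ℕ) {β : Type*} [MeasurableSpace β]
    (g : ℕ × ℕ → β) : P.map (fun ω => g (XY n ω)) ≤ (coopLaw p q n (x, y)).map g := by
  refine Measure.le_iff.2 fun s hs => ?_
  rw [Measure.map_apply (μ := coopLaw p q n (x, y)) (measurable_of_countable _) hs]
  exact (map_apply_le_preimage hs).trans (hXY.measure_mem_le n (g ⁻¹' s))

end IsCoop

def scaledMin (N : ℕ) (w : ℕ × ℕ) : ℕ := min w.1 w.2 / N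

theorem scaledMin_mono (N : ℕ) : Monotone (scaledMin N) := fun _ _ h =>
  Nat.div_le_div_right (min_le_min h.1 h.2)

theorem scaledMin_add_le (N : ℕ) (w w' : ℕ × ℕ) :
    scaledMin N w + scaledMin N w' ≤ scaledMin N (w + w') :=
  Nat.div_add_div_le_add_div.trans <| Nat.div_le_div_right <| by
    simp only [Prod.fst_add, Prod.snd_add]
    omega

theorem convPow_map_scaledMin_le {p q : ℝ} (hp0 : 0 ≤ p) (hp1 : p ≤ 1) (hq0 : 0 ≤ q)
    (hq1 : q ≤ 1) (N T a : ℕ) :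
    convPow ((coopLaw p q T (N, N)).map (scaledMin N)) a ≤ₛₜ
      (coopLaw p q T (a * N, a * N)).map (scaledMin N) := by
  have := isProbabilityMeasure_coopLaw hp0 hp1 hq0 hq1 T
  have hφ : Measurable (scaledMin N) := measurable_of_countable _
  have (s : ℕ × ℕ) : IsProbabilityMeasure ((coopLaw p q T s).map (scaledMin N)) :=
    Measure.isProbabilityMeasure_map hφ.aemeasurable
  induction a with
  | zero =>
    have h := StochLE.le_conv (Measure.dirac 0) ((coopLaw p q T (0 * N, 0 * N)).map (scaledMin N))
    rwa [Measure.dirac_zero_conv] at h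
  | succ a ih =>
    calc convPow ((coopLaw p q T (N, N)).map (scaledMin N)) (a + 1)
        = convPow ((coopLaw p q T (N, N)).map (scaledMin N)) a ∗
            (coopLaw p q T (N, N)).map (scaledMin N) := rfl
      _ ≤ₛₜ (coopLaw p q T (a * N, a * N)).map (scaledMin N) ∗
            (coopLaw p q T (N, N)).map (scaledMin N) := ih.conv (.refl _)
      _ ≤ₛₜ (coopLaw p q T (a * N, a * N) ∗ coopLaw p q T (N, N)).map (scaledMin N) :=
        StochLE.map_conv_map hφ (scaledMin_add_le N) _ _
      _ ≤ₛₜ (coopLaw p q T ((a + 1) * N, (a + 1) * N)).map (scaledMin N) :=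
        (coopLaw_conv_le hp0 hp1 hq0 hq1 T (by simp [add_mul])).map hφ (scaledMin_mono N)

theorem coop_many_big_steps_general {Ω Ω' : Type*} [MeasurableSpace Ω] [MeasurableSpace Ω']
    (P : Measure Ω) (P' : Measure Ω')
    (p q : ℝ) (hp0 : 0 ≤ p) (hp1 : p ≤ 1) (hq0 : 0 ≤ q) (hq1 : q ≤ 1)
    (x y k N T : ℕ)
    (XY : ℕ → Ω → ℕ × ℕ) (XY' : ℕ → Ω' → ℕ × ℕ)
    (hXY : IsCoop P XY p q x y) (hXY' : IsCoop P' XY' p q N N)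
    (γ : Measure ℕ)
    (hγ : γ = Measure.map (fun ω => min (XY' T ω).1 (XY' T ω).2 / N) P') :
    convPow γ (min (x / N) (y / N)) {j | k ≤ j} ≤
      P {ω | k * N ≤ min (XY T ω).1 (XY T ω).2} := by
  have := isProbabilityMeasure_coopLaw hp0 hp1 hq0 hq1 T
  have hγ_le : γ ≤ (coopLaw p q T (N, N)).map (scaledMin N) := hγ ▸ hXY'.map_le T (scaledMin N)
  have := isFiniteMeasure_of_le _ hγ_le
  set a := min (x / N) (y / N)
  have ha : (a * N, a * N) ≤ (x, y) :=
    ⟨(Nat.mul_le_mul_right N (min_le_left _ _)).trans (Nat.div_mul_le_self x N),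
      (Nat.mul_le_mul_right N (min_le_right _ _)).trans (Nat.div_mul_le_self y N)⟩
  have hdom : convPow γ a ≤ₛₜ (coopLaw p q T (x, y)).map (scaledMin N) :=
    calc convPow γ a ≤ₛₜ convPow ((coopLaw p q T (N, N)).map (scaledMin N)) a :=
          convPow_stochLE (.of_le hγ_le) a
      _ ≤ₛₜ (coopLaw p q T (a * N, a * N)).map (scaledMin N) :=
          convPow_map_scaledMin_le hp0 hp1 hq0 hq1 N T a
      _ ≤ₛₜ (coopLaw p q T (x, y)).map (scaledMin N) :=
          (StochLE.mono_of_conv_le (fun _ _ _ => coopLaw_conv_le hp0 hp1 hq0 hq1 T) ha).map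
            (measurable_of_countable _) (scaledMin_mono N)
  calc convPow γ a {j | k ≤ j}
      ≤ (coopLaw p q T (x, y)).map (scaledMin N) {j | k ≤ j} :=
        hdom.apply_le (.of_discrete) fun _ _ hij hi => hi.trans hij
    _ = coopLaw p q T (x, y) {w | k ≤ scaledMin N w} :=
        Measure.map_apply (measurable_of_countable _) (.of_discrete)
    _ ≤ coopLaw p q T (x, y) {w | k * N ≤ min w.1 w.2} :=
        measure_mono fun w hw => Nat.mul_le_of_le_div N k _ hw
    _ ≤ P {ω | k * N ≤ min (XY T ω).1 (XY T ω).2} := hXY.coopLaw_le hp0 hp1 hq0 hq1 T _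

/-- `P^{(x,y)}(Z T ≥ k N) ≥ γ^{*a}([k, ∞))`, where `a = min(⌊x/N⌋, ⌊y/N⌋)` and
`γ` is the law of `⌊Z T / N⌋` under `P^{(N,N)}`. -/
theorem coop_many_big_steps {Ω Ω' : Type*} [MeasurableSpace Ω] [MeasurableSpace Ω']
    (P : Measure Ω) (P' : Measure Ω') [IsProbabilityMeasure P] [IsProbabilityMeasure P']
    (p q : ℝ) (hp0 : 0 ≤ p) (hp1 : p ≤ 1) (hq0 : 0 ≤ q) (hq1 : q ≤ 1)
    (x y k N T : ℕ) (hN : 1 ≤ N) (hT : 1 ≤ T)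
    (XY : ℕ → Ω → ℕ × ℕ) (XY' : ℕ → Ω' → ℕ × ℕ)
    (hXY : IsCoop P XY p q x y) (hXY' : IsCoop P' XY' p q N N)
    (hmeas : ∀ n, Measurable (XY' n))
    (γ : Measure ℕ)
    (hγ : γ = Measure.map (fun ω => min (XY' T ω).1 (XY' T ω).2 / N) P') :
    convPow γ (min (x / N) (y / N)) {j | k ≤ j} ≤
      P {ω | k * N ≤ min (XY T ω).1 (XY T ω).2} :=
  coop_many_big_steps_general P P' p q hp0 hp1 hq0 hq1 x y k N T XY XY' hXY hXY' γ hγ
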